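/- arXiv:1803.01390 — 6 statements merged into one kernel-verified Lean document; each statement's English description precedes it below -/
import Mathlib

section
/- Every navigational expression built from the constants ∅, the identity relation id, edge labels, and the operations composition, union, transitive closure, converse, intersection, and projections π1, π2 is closed under homomorphisms: if h is a homomorphism from graph G1 to graph G2 and (m,n) is in the evaluation of the expression on G1, then (h(m),h(n)) is in the evaluation of the expression on G2. -/
/-- Navigational expressions over edge labels L: ∅, id, labels,
composition, union, transitive closure, converse, intersection, and
projections π1, π2. -/
inductive NExpr (L : Type) : Type
  | empty : NExpr L
  | id : NExpr L
  | label (ℓ : L) : NExpr L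
  | comp (e₁ e₂ : NExpr L) : NExpr L
  | union (e₁ e₂ : NExpr L) : NExpr L
  | tc (e : NExpr L) : NExpr L
  | conv (e : NExpr L) : NExpr L
  | inter (e₁ e₂ : NExpr L) : NExpr L
  | pr1 (e : NExpr L) : NExpr L
  | pr2 (e : NExpr L) : NExpr L

/-- Evaluation of a navigational expression on a graph given by its
label-indexed edge relations. -/
def NExpr.eval {L V : Type} (edges : L → V → V → Prop) : NExpr L → V → V → Prop
  | .empty => fun _ _ => False
  | .id => fun m n => m = n
  | .label ℓ => edges ℓ
  | .comp e₁ e₂ => Relation.Comp (e₁.eval edges) (e₂.eval edges)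
  | .union e₁ e₂ => fun m n => e₁.eval edges m n ∨ e₂.eval edges m n
  | .tc e => Relation.TransGen (e.eval edges)
  | .conv e => fun m n => e.eval edges n m
  | .inter e₁ e₂ => fun m n => e₁.eval edges m n ∧ e₂.eval edges m n
  | .pr1 e => fun m n => m = n ∧ ∃ x, e.eval edges m x
  | .pr2 e => fun m n => m = n ∧ ∃ x, e.eval edges x m

/-- Every navigational expression in this language is closed under
homomorphisms of labeled graphs. -/
theorem stmt3 (L V1 V2 : Type) [Fintype V1] [Fintype V2]
    (E1 : L → V1 → V1 → Prop) (E2 : L → V2 → V2 → Prop)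
    (h : V1 → V2) (hhom : ∀ ℓ m n, E1 ℓ m n → E2 ℓ (h m) (h n))
    (e : NExpr L) (m n : V1) (hmn : e.eval E1 m n) :
    e.eval E2 (h m) (h n) := by
  induction e generalizing m n with
  | empty => exact hmn.elim
  | id => exact congrArg h hmn
  | label ℓ => exact hhom ℓ m n hmn
  | comp e₁ e₂ ih₁ ih₂ =>
    obtain ⟨x, h1, h2⟩ := hmn
    exact ⟨h x, ih₁ m x h1, ih₂ x n h2⟩
  | union e₁ e₂ ih₁ ih₂ =>
    exact hmn.imp (ih₁ m n) (ih₂ m n)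
  | tc e ih =>
    induction hmn with
    | single hb => exact Relation.TransGen.single (ih _ _ hb)
    | tail _ hb ih' => exact Relation.TransGen.tail ih' (ih _ _ hb)
  | conv e ih => exact ih n m hmn
  | inter e₁ e₂ ih₁ ih₂ =>
    exact ⟨ih₁ m n hmn.1, ih₂ m n hmn.2⟩
  | pr1 e ih =>
    obtain ⟨rfl, x, hx⟩ := hmn
    exact ⟨rfl, h x, ih m x hx⟩
  | pr2 e ih =>
    obtain ⟨rfl, x, hx⟩ := hmn
    exact ⟨rfl, h x, ih x m hx⟩
end

section
/- Let C be an unlabeled chain and let e be a navigational expression built only from ∅, id, the edge label, composition, union, transitive closure, intersection, and difference. Then either the identity relation on nodes(C) is contained in the evaluation of e on C, or the evaluation of e on C contains no pair of the form (m,m). -/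
/-- An unlabeled tree. -/
structure DTree (V : Type) where
  E : V → V → Prop
  acyclic : ∀ v, ¬ Relation.TransGen E v v
  root : V
  root_no_in : ∀ m, ¬ E m root
  in_unique : ∀ n, n ≠ root → ∃! m, E m n

/-- A chain: a tree in which every node has at most one child. -/
structure DChain (V : Type) extends DTree V where
  at_most_one_child : ∀ m n n', E m n → E m n' → n = n'

/-- Navigational expressions over a single edge relation: ∅, id, the edge
label, composition, union, transitive closure, intersection, difference. -/
inductive UExpr : Type
  | empty : UExpr
  | id : UExpr
  | edge : UExpr
  | comp (e₁ e₂ : UExpr) : UExpr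
  | union (e₁ e₂ : UExpr) : UExpr
  | tc (e : UExpr) : UExpr
  | inter (e₁ e₂ : UExpr) : UExpr
  | diff (e₁ e₂ : UExpr) : UExpr

/-- Evaluation of an expression on an unlabeled graph. -/
def UExpr.eval {V : Type} (E : V → V → Prop) : UExpr → V → V → Prop
  | .empty => fun _ _ => False
  | .id => fun m n => m = n
  | .edge => E
  | .comp e₁ e₂ => Relation.Comp (e₁.eval E) (e₂.eval E)
  | .union e₁ e₂ => fun m n => e₁.eval E m n ∨ e₂.eval E m n
  | .tc e => Relation.TransGen (e.eval E)
  | .inter e₁ e₂ => fun m n => e₁.eval E m n ∧ e₂.eval E m n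
  | .diff e₁ e₂ => fun m n => e₁.eval E m n ∧ ¬ e₂.eval E m n

/-!
No operation of the language reverses edges, so every expression evaluates inside the
reflexive-transitive closure `E*` of the edge relation, and on an acyclic graph `E*` is
antisymmetric. Hence a loop `(m, m)` in a composition or a transitive closure can only come from
loops `(m, m)` of its parts, and by induction whether `(m, m)` belongs to the evaluation is a
property of the expression alone, independent of `m`.
-/

open Relation

theorem Relation.ReflTransGen.antisymm_of_acyclic {V : Type} {E : V → V → Prop}
    (hE : ∀ v, ¬ TransGen E v v) {a b : V} (hab : ReflTransGen E a b)
    (hba : ReflTransGen E b a) : a = b := by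
  rcases reflTransGen_iff_eq_or_transGen.1 hab with rfl | hab
  · rfl
  · exact (hE a (hab.trans_left hba)).elim

namespace UExpr

def HoldsOnDiag : UExpr → Prop
  | .empty => False
  | .id => True
  | .edge => False
  | .comp e₁ e₂ => e₁.HoldsOnDiag ∧ e₂.HoldsOnDiag
  | .union e₁ e₂ => e₁.HoldsOnDiag ∨ e₂.HoldsOnDiag
  | .tc e => e.HoldsOnDiag
  | .inter e₁ e₂ => e₁.HoldsOnDiag ∧ e₂.HoldsOnDiag
  | .diff e₁ e₂ => e₁.HoldsOnDiag ∧ ¬ e₂.HoldsOnDiag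

variable {V : Type} {E : V → V → Prop}

theorem eval_le_reflTransGen (e : UExpr) : e.eval E ≤ ReflTransGen E := by
  induction e with
  | empty => exact fun _ _ h => h.elim
  | id => rintro m _ rfl; rfl
  | edge => exact fun _ _ => ReflTransGen.single
  | comp e₁ e₂ ih₁ ih₂ => exact fun _ _ ⟨_, h₁, h₂⟩ => (ih₁ _ _ h₁).trans (ih₂ _ _ h₂)
  | union e₁ e₂ ih₁ ih₂ => exact fun _ _ h => h.elim (ih₁ _ _) (ih₂ _ _)
  | tc e ih => exact fun _ _ h => reflTransGen_closed ih _ _ h.to_reflTransGen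
  | inter e₁ e₂ ih₁ ih₂ => exact fun _ _ h => ih₁ _ _ h.1
  | diff e₁ e₂ ih₁ ih₂ => exact fun _ _ h => ih₁ _ _ h.1

theorem eval_self_iff (hE : ∀ v, ¬ TransGen E v v) (e : UExpr) (m : V) :
    e.eval E m m ↔ e.HoldsOnDiag := by
  induction e with
  | empty => exact Iff.rfl
  | id => exact iff_of_true rfl trivial
  | edge => exact iff_of_false (fun h => hE m (.single h)) not_false
  | comp e₁ e₂ ih₁ ih₂ =>
    rw [HoldsOnDiag, ← ih₁, ← ih₂]
    refine ⟨fun ⟨p, hmp, hpm⟩ => ?_, fun h => ⟨m, h⟩⟩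
    obtain rfl : m = p := (eval_le_reflTransGen e₁ _ _ hmp).antisymm_of_acyclic hE
      (eval_le_reflTransGen e₂ _ _ hpm)
    exact ⟨hmp, hpm⟩
  | union e₁ e₂ ih₁ ih₂ => exact or_congr ih₁ ih₂
  | tc e ih =>
    rw [HoldsOnDiag, ← ih]
    refine ⟨fun h => ?_, TransGen.single⟩
    obtain ⟨p, hmp, hpm⟩ := TransGen.head'_iff.1 h
    obtain rfl : m = p := (eval_le_reflTransGen e _ _ hmp).antisymm_of_acyclic hE
      (reflTransGen_closed (eval_le_reflTransGen e) _ _ hpm)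
    exact hmp
  | inter e₁ e₂ ih₁ ih₂ => exact and_congr ih₁ ih₂
  | diff e₁ e₂ ih₁ ih₂ => exact and_congr ih₁ (not_congr ih₂)

end UExpr

theorem stmt5_general (V : Type) (C : DChain V) (e : UExpr) :
    (∀ m : V, e.eval C.E m m) ∨ (∀ m : V, ¬ e.eval C.E m m) :=
  (em e.HoldsOnDiag).imp (fun h m => (e.eval_self_iff C.acyclic m).2 h)
    fun h m hm => h ((e.eval_self_iff C.acyclic m).1 hm)

/-- On an unlabeled chain, the evaluation of any expression in this
language either contains the whole identity relation, or contains no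
pair of the form (m, m). -/
theorem stmt5 (V : Type) [Fintype V] (C : DChain V) (e : UExpr) :
    (∀ m : V, e.eval C.E m m) ∨ (∀ m : V, ¬ e.eval C.E m m) :=
  stmt5_general V C e
end

section
/- On unlabeled chains, no navigational expression in the language generated by ∅, id, the edge label, composition, union, transitive closure, intersection, and difference is path-equivalent to π1(E), the set {(m,m) | ∃n (m,n) ∈ E}, where E is the edge relation. That is, there exists an unlabeled chain C on which every such expression differs from π1(E). -/
/-- The edge relation of the 2-node chain false → true. -/
def E2 : Bool → Bool → Prop := fun m n => m = false ∧ n = true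

lemma rt_no_tf {R : Bool → Bool → Prop} (h : ¬ R true false) :
    ∀ x y, Relation.ReflTransGen R x y → x = true → y = true := by
  intro x y hxy
  induction hxy with
  | refl => exact fun hx => hx
  | tail _ hr ih =>
    intro hx
    have hb := ih hx
    subst hb
    rename_i c _
    cases c with
    | false => exact absurd hr h
    | true => rfl

lemma tg_no_tf {R : Bool → Bool → Prop} (h : ¬ R true false)
    (htg : Relation.TransGen R true false) : False := by
  obtain ⟨c, hr, hrt⟩ := Relation.TransGen.head'_iff.mp htg
  cases c with
  | false => exact h hr
  | true => exact absurd (rt_no_tf h _ _ hrt rfl) (by simp)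

lemma tg_diag {R : Bool → Bool → Prop} (h : ¬ R true false) (b : Bool)
    (htg : Relation.TransGen R b b) : R b b := by
  obtain ⟨c, hr, hrt⟩ := Relation.TransGen.head'_iff.mp htg
  cases b with
  | false =>
    cases c with
    | false => exact hr
    | true => exact absurd (rt_no_tf h _ _ hrt rfl) (by simp)
  | true =>
    cases c with
    | false => exact absurd hr h
    | true => exact hr

lemma key (e : UExpr) :
    ¬ e.eval E2 true false ∧ (e.eval E2 false false ↔ e.eval E2 true true) := by
  induction e with
  | empty => simp [UExpr.eval]
  | id => simp [UExpr.eval]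
  | edge => simp [UExpr.eval, E2]
  | comp e₁ e₂ ih₁ ih₂ =>
    obtain ⟨h1, d1⟩ := ih₁; obtain ⟨h2, d2⟩ := ih₂
    refine ⟨?_, ?_, ?_⟩
    · rintro ⟨x, hx1, hx2⟩
      cases x with
      | false => exact h1 hx1
      | true => exact h2 hx2
    · rintro ⟨x, hx1, hx2⟩
      cases x with
      | true => exact absurd hx2 h2
      | false => exact ⟨true, d1.mp hx1, d2.mp hx2⟩
    · rintro ⟨x, hx1, hx2⟩
      cases x with
      | false => exact absurd hx1 h1
      | true => exact ⟨false, d1.mpr hx1, d2.mpr hx2⟩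
  | union e₁ e₂ ih₁ ih₂ =>
    obtain ⟨h1, d1⟩ := ih₁; obtain ⟨h2, d2⟩ := ih₂
    exact ⟨fun h => h.elim h1 h2, or_congr d1 d2⟩
  | tc e ih =>
    obtain ⟨h, d⟩ := ih
    refine ⟨fun htg => tg_no_tf h htg, ?_, ?_⟩
    · intro htg
      exact Relation.TransGen.single (d.mp (tg_diag h _ htg))
    · intro htg
      exact Relation.TransGen.single (d.mpr (tg_diag h _ htg))
  | inter e₁ e₂ ih₁ ih₂ =>
    obtain ⟨h1, d1⟩ := ih₁; obtain ⟨h2, d2⟩ := ih₂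
    exact ⟨fun h => h1 h.1, and_congr d1 d2⟩
  | diff e₁ e₂ ih₁ ih₂ =>
    obtain ⟨h1, d1⟩ := ih₁; obtain ⟨h2, d2⟩ := ih₂
    exact ⟨fun h => h1 h.1, and_congr d1 (not_congr d2)⟩

lemma E2_acyclic : ∀ v, ¬ Relation.TransGen E2 v v := by
  intro v htg
  have h : ¬ E2 true false := by simp [E2]
  have := tg_diag h v htg
  simp [E2] at this

/-- There exists an unlabeled chain on which every expression of this
language differs from π1(E) = {(m,m) | ∃ n, E m n}; hence no such
expression is path-equivalent to π1(E) on unlabeled chains. -/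

theorem stmt6 :
    ∃ (V : Type) (_ : Fintype V) (C : DChain V), ∀ e : UExpr,
      ∃ m n : V, ¬ (e.eval C.E m n ↔ (m = n ∧ ∃ x, C.E m x)) := by
  refine ⟨Bool, inferInstance,
    { E := E2
      acyclic := E2_acyclic
      root := false
      root_no_in := by simp [E2]
      in_unique := by
        intro n hn
        have : n = true := by cases n <;> simp_all
        subst this
        exact ⟨false, ⟨rfl, rfl⟩, fun m hm => hm.1⟩
      at_most_one_child := by rintro m n n' ⟨_, rfl⟩ ⟨_, rfl⟩; rfl }, ?_⟩
  intro e
  obtain ⟨h, d⟩ := key e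
  by_cases hff : e.eval E2 false false
  · refine ⟨true, true, fun hiff => ?_⟩
    have := (hiff.mp (d.mp hff)).2
    obtain ⟨x, hx⟩ := this
    simp [E2] at hx
  · refine ⟨false, false, fun hiff => ?_⟩
    exact hff (hiff.mpr ⟨rfl, true, rfl, rfl⟩)
end

section
/- Let e be a navigational expression over labeled graphs built from ∅, id, edge labels, composition, union, and transitive closure. If there exists a labeled tree T with nonempty evaluation of e on T, then there exists a labeled chain C with root r and leaf l such that (r,l) is in the evaluation of e on C. -/
/-- A labeled tree: label-indexed edge relations whose union is acyclic,
with a unique root without incoming edges and exactly one incoming edge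
(a parent together with a label) for every other node. -/
structure LTree (L V : Type) where
  edges : L → V → V → Prop
  acyclic : ∀ v, ¬ Relation.TransGen (fun m n => ∃ ℓ, edges ℓ m n) v v
  root : V
  root_no_in : ∀ m ℓ, ¬ edges ℓ m root
  in_unique : ∀ n, n ≠ root → ∃! p : V × L, edges p.2 p.1 n

/-- A labeled chain: a labeled tree in which every node has at most one
child. -/
structure LChain (L V : Type) extends LTree L V where
  at_most_one_child :
    ∀ m n n', (∃ ℓ, edges ℓ m n) → (∃ ℓ, edges ℓ m n') → n = n'

/-- Navigational expressions: ∅, id, edge labels, composition, union,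
and transitive closure. -/
inductive LExpr (L : Type) : Type
  | empty : LExpr L
  | id : LExpr L
  | label (ℓ : L) : LExpr L
  | comp (e₁ e₂ : LExpr L) : LExpr L
  | union (e₁ e₂ : LExpr L) : LExpr L
  | tc (e : LExpr L) : LExpr L

/-- Evaluation of an expression on a labeled graph. -/
def LExpr.eval {L V : Type} (edges : L → V → V → Prop) :
    LExpr L → V → V → Prop
  | .empty => fun _ _ => False
  | .id => fun m n => m = n
  | .label ℓ => edges ℓ
  | .comp e₁ e₂ => Relation.Comp (e₁.eval edges) (e₂.eval edges)
  | .union e₁ e₂ => fun m n => e₁.eval edges m n ∨ e₂.eval edges m n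
  | .tc e => Relation.TransGen (e.eval edges)

/-!
The atoms of `e` only follow edges, so a pair `(m, n)` in the evaluation of `e` on a tree is
joined by a directed path `m →* n`, and every intermediate node the evaluation passes through lies
on that path. Since parents in a tree are unique, the nodes `x` with `m →* x →* n` form a chain
with root `m` and leaf `n`, and the evaluation of `e` restricted to this chain still relates
`m` to `n`.
-/

open Relation

namespace LGraph

variable {L V : Type}

def adj (edges : L → V → V → Prop) (x y : V) : Prop := ∃ ℓ, edges ℓ x y

def induce (edges : L → V → V → Prop) (S : Set V) (ℓ : L) (x y : S) : Prop := edges ℓ x y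

def PathConvex (edges : L → V → V → Prop) (S : Set V) : Prop :=
  ∀ ⦃a b k⦄, a ∈ S → b ∈ S → ReflTransGen (adj edges) a k → ReflTransGen (adj edges) k b → k ∈ S

end LGraph

open LGraph

namespace LExpr

variable {L V : Type}

theorem reflTransGen_adj_of_eval {edges : L → V → V → Prop} (e : LExpr L) {x y : V}
    (h : e.eval edges x y) : ReflTransGen (adj edges) x y := by
  induction e generalizing x y with
  | empty => exact h.elim
  | id => exact h ▸ .refl
  | label ℓ => exact .single ⟨ℓ, h⟩
  | comp e₁ e₂ ih₁ ih₂ =>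
    obtain ⟨k, h₁, h₂⟩ := h
    exact (ih₁ h₁).trans (ih₂ h₂)
  | union e₁ e₂ ih₁ ih₂ => exact h.elim ih₁ ih₂
  | tc e ih =>
    induction h with
    | single h => exact ih h
    | tail _ h ih' => exact ih'.trans (ih h)

theorem eval_induce_of_pathConvex {edges : L → V → V → Prop} {S : Set V}
    (hS : PathConvex edges S) (e : LExpr L) {a b : S} (h : e.eval edges a b) :
    e.eval (induce edges S) a b := by
  induction e generalizing a b with
  | empty => exact h.elim
  | id => exact Subtype.ext h
  | label ℓ => exact h
  | comp e₁ e₂ ih₁ ih₂ =>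
    obtain ⟨k, h₁, h₂⟩ := h
    have hk : k ∈ S := hS a.2 b.2 (e₁.reflTransGen_adj_of_eval h₁) (e₂.reflTransGen_adj_of_eval h₂)
    exact ⟨⟨k, hk⟩, ih₁ h₁, ih₂ h₂⟩
  | union e₁ e₂ ih₁ ih₂ => exact h.imp ih₁ ih₂
  | tc e ih =>
    obtain ⟨b, hb⟩ := b
    change TransGen _ a.1 b at h
    induction h with
    | single h => exact .single (ih h)
    | @tail k b hak hkb ih' =>
      have hk : k ∈ S :=
        hS a.2 hb ((LExpr.tc e).reflTransGen_adj_of_eval hak) (e.reflTransGen_adj_of_eval hkb)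
      exact (ih' hk).tail (ih (a := ⟨k, hk⟩) (b := ⟨b, hb⟩) hkb)

end LExpr

namespace LTree

variable {L V : Type} (T : LTree L V)

theorem parent_unique {ℓ ℓ' : L} {p q b : V} (hp : T.edges ℓ p b) (hq : T.edges ℓ' q b) :
    p = q ∧ ℓ = ℓ' := by
  have hb : b ≠ T.root := fun h => T.root_no_in p ℓ (h ▸ hp)
  obtain ⟨_, _, huniq⟩ := T.in_unique b hb
  simpa using (huniq (p, ℓ) hp).trans (huniq (q, ℓ') hq).symm

theorem leftUnique_adj : Relator.LeftUnique (adj T.edges) :=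
  fun _ _ _ ⟨_, hp⟩ ⟨_, hq⟩ => (T.parent_unique hp hq).1

theorem not_adj_of_reflTransGen {x y : V} (hxy : ReflTransGen (adj T.edges) x y) :
    ¬ adj T.edges y x :=
  fun hyx => T.acyclic y (TransGen.head' hyx hxy)

theorem reflTransGen_total {a b c : V} (hac : ReflTransGen (adj T.edges) a c)
    (hbc : ReflTransGen (adj T.edges) b c) :
    ReflTransGen (adj T.edges) a b ∨ ReflTransGen (adj T.edges) b a := by
  have hU : Relator.RightUnique (Function.swap (adj T.edges)) :=
    fun _ _ _ hb hc => T.leftUnique_adj hb hc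
  simpa only [reflTransGen_swap, or_comm] using
    ReflTransGen.total_of_right_unique hU (reflTransGen_swap.2 hac) (reflTransGen_swap.2 hbc)

theorem eq_of_adj_of_adj_of_reflTransGen {a p q : V} (hp : adj T.edges a p)
    (hq : adj T.edges a q) (hpq : ReflTransGen (adj T.edges) p q) : p = q := by
  rcases hpq.cases_tail with h | ⟨x, hpx, hxq⟩
  · exact h.symm
  · obtain rfl : x = a := T.leftUnique_adj hxq hq
    exact (T.not_adj_of_reflTransGen hpx hp).elim

def segment (m n : V) : Set V :=
  {x | ReflTransGen (adj T.edges) m x ∧ ReflTransGen (adj T.edges) x n}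

theorem pathConvex_segment (m n : V) : PathConvex T.edges (T.segment m n) :=
  fun _ _ _ ha hb hak hkb => ⟨ha.1.trans hak, hkb.trans hb.2⟩

theorem existsUnique_parent_segment {m n : V} (b : T.segment m n) (hb : b.1 ≠ m) :
    ∃! p : T.segment m n × L, induce T.edges (T.segment m n) p.2 p.1 b := by
  obtain h | ⟨x, hmx, ℓ, hxb⟩ := b.2.1.cases_tail
  · exact (hb h).elim
  refine ⟨(⟨x, hmx, .head ⟨ℓ, hxb⟩ b.2.2⟩, ℓ), hxb, ?_⟩
  rintro ⟨q, ℓ'⟩ hq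
  obtain ⟨hqx, rfl⟩ := T.parent_unique hq hxb
  exact Prod.ext (Subtype.ext hqx) rfl

def pathChain {m n : V} (hmn : ReflTransGen (adj T.edges) m n) : LChain L (T.segment m n) where
  edges := induce T.edges (T.segment m n)
  acyclic v hv := T.acyclic v.1 (TransGen.lift Subtype.val (fun _ _ h => h) _ _ hv)
  root := ⟨m, .refl, hmn⟩
  root_no_in a ℓ h := T.not_adj_of_reflTransGen a.2.1 ⟨ℓ, h⟩
  in_unique b hb := T.existsUnique_parent_segment b fun h => hb (Subtype.ext h)
  at_most_one_child a b b' := by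
    rintro ⟨ℓ, hb⟩ ⟨ℓ', hb'⟩
    refine Subtype.ext ?_
    rcases T.reflTransGen_total b.2.2 b'.2.2 with h | h
    · exact T.eq_of_adj_of_adj_of_reflTransGen ⟨ℓ, hb⟩ ⟨ℓ', hb'⟩ h
    · exact (T.eq_of_adj_of_adj_of_reflTransGen ⟨ℓ', hb'⟩ ⟨ℓ, hb⟩ h).symm

theorem pathChain_edges {m n : V} (hmn : ReflTransGen (adj T.edges) m n) :
    (T.pathChain hmn).edges = induce T.edges (T.segment m n) := rfl

theorem pathChain_root {m n : V} (hmn : ReflTransGen (adj T.edges) m n) :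
    (T.pathChain hmn).root = ⟨m, .refl, hmn⟩ := rfl

end LTree

/-- If an expression of this language evaluates nonempty on some labeled
tree, then there is a labeled chain C with root r and leaf l such that
(r, l) is in the evaluation of the expression on C. -/
theorem stmt9 (L : Type) (e : LExpr L)
    (hne : ∃ (V : Type) (_ : Fintype V) (T : LTree L V) (m n : V),
      e.eval T.edges m n) :
    ∃ (V : Type) (_ : Fintype V) (C : LChain L V) (l : V),
      (∀ x ℓ, ¬ C.edges ℓ l x) ∧ e.eval C.edges C.root l := by
  obtain ⟨V, _, T, m, n, hmn⟩ := hne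
  have hpath := e.reflTransGen_adj_of_eval hmn
  refine ⟨T.segment m n, Fintype.ofFinite _, T.pathChain hpath, ⟨n, hpath, .refl⟩, ?_, ?_⟩
  · rw [T.pathChain_edges]
    exact fun x ℓ h => T.not_adj_of_reflTransGen x.2.2 ⟨ℓ, h⟩
  · rw [T.pathChain_edges, T.pathChain_root]
    exact e.eval_induce_of_pathConvex (T.pathConvex_segment m n) hmn
end

section
/- On labeled trees, the boolean query π1(a) ∘ π1(b) for distinct edge labels a, b — which is nonempty on a tree exactly when some node has both an outgoing a-edge and an outgoing b-edge — is not boolean-equivalent to any navigational expression built from ∅, id, edge labels, composition, union, and transitive closure. -/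
/-! The query holds on the tree whose root has an `a`-child and a `b`-child, so `e` would have
to be nonempty there. Nonemptiness of `e` on any graph yields a word `u` in the regular language
of `e`, and every such word is realized by a path in the chain labelled by `u`. Hence `e` is
nonempty on that chain, whereas on a chain no node has outgoing edges with two distinct labels. -/

theorem Relation.not_transGen_self_of_le_lt {α : Type*} [Preorder α] {r : α → α → Prop}
    (h : r ≤ (· < ·)) (a : α) : ¬ Relation.TransGen r a a := fun hr =>
  lt_irrefl a <| by simpa only [Relation.transGen_eq_self] using Relation.TransGen.mono h a a hr

theorem LChain.label_eq_of_edges {L V : Type} (T : LChain L V) {a b : L} {m x y : V}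
    (hx : T.edges a m x) (hy : T.edges b m y) : a = b := by
  obtain rfl : x = y := T.at_most_one_child m x y ⟨a, hx⟩ ⟨b, hy⟩
  have hroot : x ≠ T.root := by
    rintro rfl
    exact T.root_no_in m a hx
  exact congrArg Prod.snd ((T.in_unique x hroot).unique (y₁ := (m, a)) (y₂ := (m, b)) hx hy)

namespace LExpr

variable {L : Type}

/-- `e.Accepts u`: the word `u` lies in the regular language of `e`, with `tc` read as Kleene
plus. -/
inductive Accepts : LExpr L → List L → Prop
  | id : Accepts .id []
  | label (ℓ : L) : Accepts (.label ℓ) [ℓ]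
  | comp {e₁ e₂ u₁ u₂} : Accepts e₁ u₁ → Accepts e₂ u₂ → Accepts (.comp e₁ e₂) (u₁ ++ u₂)
  | unionLeft {e₁ e₂ u} : Accepts e₁ u → Accepts (.union e₁ e₂) u
  | unionRight {e₁ e₂ u} : Accepts e₂ u → Accepts (.union e₁ e₂) u
  | tcSingle {e u} : Accepts e u → Accepts (.tc e) u
  | tcTail {e u₁ u₂} : Accepts (.tc e) u₁ → Accepts e u₂ → Accepts (.tc e) (u₁ ++ u₂)

theorem exists_accepts_of_eval {V : Type} {edges : L → V → V → Prop} :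
    ∀ {e : LExpr L} {m n : V}, e.eval edges m n → ∃ u, e.Accepts u
  | .id, _, _, _ => ⟨[], .id⟩
  | .label ℓ, _, _, _ => ⟨[ℓ], .label ℓ⟩
  | .comp _ _, _, _, ⟨_, h₁, h₂⟩ =>
    let ⟨u₁, hu₁⟩ := exists_accepts_of_eval h₁
    let ⟨u₂, hu₂⟩ := exists_accepts_of_eval h₂
    ⟨u₁ ++ u₂, .comp hu₁ hu₂⟩
  | .union _ _, _, _, .inl h => let ⟨u, hu⟩ := exists_accepts_of_eval h; ⟨u, .unionLeft hu⟩
  | .union _ _, _, _, .inr h => let ⟨u, hu⟩ := exists_accepts_of_eval h; ⟨u, .unionRight hu⟩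
  | .tc _, _, _, h => by
    induction h with
    | single h => obtain ⟨u, hu⟩ := exists_accepts_of_eval h; exact ⟨u, .tcSingle hu⟩
    | tail _ h ih =>
      obtain ⟨u₁, hu₁⟩ := ih
      obtain ⟨u₂, hu₂⟩ := exists_accepts_of_eval h
      exact ⟨u₁ ++ u₂, .tcTail hu₁ hu₂⟩

end LExpr

def chainOf {L : Type} (w : List L) : LChain L (Fin (w.length + 1)) where
  edges ℓ i j := w[(i : ℕ)]? = some ℓ ∧ (j : ℕ) = i + 1
  acyclic := Relation.not_transGen_self_of_le_lt fun i j ⟨_, _, hj⟩ =>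
    Fin.lt_def.2 (by omega)
  root := 0
  root_no_in _ _ := by simp
  in_unique n hn := by
    have hpos : 0 < (n : ℕ) := Nat.pos_of_ne_zero (Fin.val_ne_zero_iff.2 hn)
    refine ⟨(⟨n - 1, by omega⟩, w[(n : ℕ) - 1]), ⟨by simp, (Nat.sub_add_cancel hpos).symm⟩, ?_⟩
    rintro ⟨p, ℓ⟩ ⟨hℓ, hp⟩
    simp only at hℓ hp
    have hp' : (p : ℕ) = n - 1 := by omega
    refine Prod.ext (Fin.ext hp') ?_
    rw [hp', List.getElem?_eq_getElem (by omega)] at hℓ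
    exact (Option.some.inj hℓ).symm
  at_most_one_child := by
    rintro m n n' ⟨_, _, h⟩ ⟨_, _, h'⟩
    exact Fin.ext (by omega)

theorem List.exists_split_of_append_prefix_drop {α : Type*} {w u₁ u₂ : List α}
    {i j : Fin (w.length + 1)} (hi : u₁ ++ u₂ <+: w.drop i)
    (hj : (j : ℕ) = i + (u₁ ++ u₂).length) :
    ∃ k : Fin (w.length + 1), (u₁ <+: w.drop i ∧ (k : ℕ) = i + u₁.length) ∧
      (u₂ <+: w.drop k ∧ (j : ℕ) = k + u₂.length) := by
  have hlen := hi.length_le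
  simp only [List.length_append, List.length_drop] at hlen hj
  refine ⟨⟨i + u₁.length, by omega⟩, ⟨(List.prefix_append u₁ u₂).trans hi, rfl⟩, ?_, ?_⟩
  · simpa [List.drop_drop] using hi.drop u₁.length
  · simp only
    omega

theorem LExpr.Accepts.eval_chainOf {L : Type} {w : List L} {e : LExpr L} {u : List L}
    (hu : e.Accepts u) (i j : Fin (w.length + 1)) (hi : u <+: w.drop i)
    (hj : (j : ℕ) = i + u.length) : e.eval (chainOf w).edges i j := by
  induction hu generalizing i j with
  | id => exact Fin.ext hj.symm
  | label ℓ =>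
    refine ⟨?_, hj⟩
    simpa using List.singleton_prefix_iff_head?_eq_some.1 hi
  | comp _ _ ih₁ ih₂ =>
    obtain ⟨k, ⟨h₁, hk₁⟩, h₂, hk₂⟩ := List.exists_split_of_append_prefix_drop hi hj
    exact ⟨k, ih₁ i k h₁ hk₁, ih₂ k j h₂ hk₂⟩
  | unionLeft _ ih => exact .inl (ih i j hi hj)
  | unionRight _ ih => exact .inr (ih i j hi hj)
  | tcSingle _ ih => exact .single (ih i j hi hj)
  | tcTail _ _ ih₁ ih₂ =>
    obtain ⟨k, ⟨h₁, hk₁⟩, h₂, hk₂⟩ := List.exists_split_of_append_prefix_drop hi hj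
    exact .tail (ih₁ i k h₁ hk₁) (ih₂ k j h₂ hk₂)

def forkTree {L : Type} (a b : L) : LTree L (Fin 3) where
  edges ℓ m n := m = 0 ∧ (ℓ = a ∧ n = 1 ∨ ℓ = b ∧ n = 2)
  acyclic := Relation.not_transGen_self_of_le_lt fun m n ⟨_, hm, hn⟩ => by
    rcases hn with ⟨_, rfl⟩ | ⟨_, rfl⟩ <;> subst hm <;> decide
  root := 0
  root_no_in := by simp
  in_unique n hn := by
    fin_cases n
    · exact absurd rfl hn
    · exact ⟨(0, a), by simp, by simp_all⟩
    · exact ⟨(0, b), by simp, by simp_all⟩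

/-- On labeled trees, the boolean query π1(a) ∘ π1(b) for distinct labels
a and b — nonempty exactly when some node has both an outgoing a-edge and
an outgoing b-edge — is not boolean-equivalent to any expression of this
language. -/
theorem stmt10 (L : Type) (a b : L) (hab : a ≠ b) (e : LExpr L) :
    ¬ ∀ (V : Type), Fintype V → ∀ T : LTree L V,
      ((∃ m n : V, e.eval T.edges m n) ↔
        (∃ m : V, (∃ x, T.edges a m x) ∧ (∃ y, T.edges b m y))) := by
  intro h
  obtain ⟨_, _, he⟩ := (h (Fin 3) inferInstance (forkTree a b)).2
    ⟨0, ⟨1, rfl, .inl ⟨rfl, rfl⟩⟩, ⟨2, rfl, .inr ⟨rfl, rfl⟩⟩⟩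
  obtain ⟨u, hu⟩ := LExpr.exists_accepts_of_eval he
  obtain ⟨_, ⟨_, hx⟩, ⟨_, hy⟩⟩ := (h _ inferInstance (chainOf u).toLTree).1
    ⟨0, Fin.last _, hu.eval_chainOf 0 (Fin.last _) (by simp) (by simp)⟩
  exact hab ((chainOf u).label_eq_of_edges hx hy)
end

section
/- There exists a directed acyclic graph G with a single edge relation a such that the evaluation of a^3 ∩ a^7 on G is nonempty, while the evaluation of (a^21)^+ on G is empty. Hence the identity (a^3)^+ ∩ (a^7)^+ = (a^21)^+ fails on general graphs. -/
/-- k-fold composition of a relation (relPow R 0 = equality). -/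
def relPow {V : Type} (R : V → V → Prop) : ℕ → V → V → Prop
  | 0 => fun m n => m = n
  | k + 1 => Relation.Comp R (relPow R k)

/-- Edge relation: two disjoint paths of length 3 and 7 from 0 to 9. -/
def myEdge (x y : Fin 10) : Prop :=
  (x = 0 ∧ y = 1) ∨ (x = 1 ∧ y = 2) ∨ (x = 2 ∧ y = 9) ∨
  (x = 0 ∧ y = 3) ∨ (x = 3 ∧ y = 4) ∨ (x = 4 ∧ y = 5) ∨
  (x = 5 ∧ y = 6) ∨ (x = 6 ∧ y = 7) ∨ (x = 7 ∧ y = 8) ∨ (x = 8 ∧ y = 9)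

lemma myEdge_lt : ∀ x y : Fin 10, myEdge x y → (x : ℕ) < (y : ℕ) := by unfold myEdge; decide

lemma relPow_le : ∀ (k : ℕ) (m n : Fin 10), relPow myEdge k m n →
    (m : ℕ) + k ≤ (n : ℕ) := by
  intro k
  induction k with
  | zero => intro m n h; cases h; simp
  | succ k ih =>
    rintro m n ⟨c, hmc, hcn⟩
    have h1 := myEdge_lt m c hmc
    have h2 := ih c n hcn
    omega

/-- There is a finite directed acyclic graph on which a^3 ∩ a^7 is
nonempty while (a^21)^+ is empty; hence (a^3)^+ ∩ (a^7)^+ = (a^21)^+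
fails on general graphs. -/
theorem stmt12 :
    ∃ (V : Type) (_ : Fintype V) (a : V → V → Prop),
      (∀ v, ¬ Relation.TransGen a v v) ∧
      (∃ m n : V, relPow a 3 m n ∧ relPow a 7 m n) ∧
      (∀ m n : V, ¬ Relation.TransGen (relPow a 21) m n) := by
  refine ⟨Fin 10, inferInstance, myEdge, ?_, ?_, ?_⟩
  · intro v hv
    have : (v : ℕ) < (v : ℕ) := by
      have h : ∀ x y : Fin 10, Relation.TransGen myEdge x y → (x : ℕ) < (y : ℕ) := by
        intro x y h
        induction h with
        | single h => exact myEdge_lt _ _ h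
        | tail _ h ih => exact ih.trans (myEdge_lt _ _ h)
      exact h v v hv
    omega
  · refine ⟨0, 9, ⟨1, ?_, 2, ?_, 9, ?_, rfl⟩,
      ⟨3, ?_, 4, ?_, 5, ?_, 6, ?_, 7, ?_, 8, ?_, 9, ?_, rfl⟩⟩ <;> (unfold myEdge; decide)
  · intro m n h
    induction h with
    | single h => have := relPow_le 21 _ _ h; have := (9 : Fin 10).isLt; omega
    | tail _ h _ => have := relPow_le 21 _ _ h; omega
end
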